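/- (Theorem 2, part 2.) There exists a sequence of reals δ_s → 0 as s → ∞ such that for all sufficiently large integers s and every rate R with 0 < R ≤ (ln 2 / s)(1 + δ_s), the random coding lower bound is positive: Ē_s(R) > 0, where Ē_s(R) = max_{0 < Q < 1} min_{Q ≤ q < min{1, sQ}} { 𝒜(s, Q, q) + [h(Q) − q·h(Q/q) − R]⁺ }, 𝒜(s, Q, q) = (1 − q) log₂(1 − q) + q log₂( Q y^s / (1 − y) ) + sQ log₂( (1 − y)/y ) + s·h(Q), and y = y(s, Q, q) is the unique root in (0, 1) of q = Q (1 − y^s)/(1 − y). -/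

import Mathlib

/-- The binary entropy function `h(Q) = −Q log₂ Q − (1 − Q) log₂(1 − Q)`. -/
noncomputable def binH (Q : ℝ) : ℝ :=
  -Q * Real.logb 2 Q - (1 - Q) * Real.logb 2 (1 - Q)

/-- The root `y ∈ (0, 1)` of the equation `q = Q (1 − yˢ)/(1 − y)`
(chosen by choice; it is unique in the relevant range of parameters). -/
noncomputable def rootY (s : ℕ) (Q q : ℝ) : ℝ :=
  haveI := Classical.propDecidable
    (∃ y : ℝ, y ∈ Set.Ioo (0 : ℝ) 1 ∧ q = Q * (1 - y ^ s) / (1 - y))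
  if h : ∃ y : ℝ, y ∈ Set.Ioo (0 : ℝ) 1 ∧ q = Q * (1 - y ^ s) / (1 - y) then
    h.choose
  else 0

/-- The function `𝒜(s, Q, q)` from the random coding bound, where `y` is the
root in `(0,1)` of `q = Q (1 − yˢ)/(1 − y)`. -/
noncomputable def Afun (s : ℕ) (Q q : ℝ) : ℝ :=
  (1 - q) * Real.logb 2 (1 - q) +
    q * Real.logb 2 (Q * rootY s Q q ^ s / (1 - rootY s Q q)) +
    (s : ℝ) * Q * Real.logb 2 ((1 - rootY s Q q) / rootY s Q q) +
    (s : ℝ) * binH Q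

/-- The random coding lower bound `Ē_s(R)`:
`max_{0<Q<1} min_{Q ≤ q < min{1, sQ}} { 𝒜(s,Q,q) + [h(Q) − q h(Q/q) − R]⁺ }`,
with the outer max read as a supremum and the inner min as an infimum. -/
noncomputable def EbarDisj (s : ℕ) (R : ℝ) : ℝ :=
  sSup { e : ℝ | ∃ Q ∈ Set.Ioo (0 : ℝ) 1,
    e = sInf { v : ℝ | ∃ q ∈ Set.Ico Q (min 1 ((s : ℝ) * Q)),
      v = Afun s Q q + max (binH Q - q * binH (Q / q) - R) 0 } }


section AuxLemmas
open Real Finset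

lemma sum_split (s : ℕ) (f : ℕ → ℝ) :
    ∑ k ∈ range (s+1), f k = f 0 + ∑ k ∈ Icc 1 s, f k := by
  rw [range_eq_Ico, sum_eq_sum_Ico_succ_bot (Nat.succ_pos s), Nat.succ_eq_add_one, Finset.Ico_add_one_right_eq_Icc]

lemma sum_binom (s : ℕ) (x y : ℝ) (hxy : x + y = 1) :
    ∑ k ∈ range (s+1), (s.choose k : ℝ) * x^k * y^(s-k) = 1 := by
  have h := add_pow x y s
  rw [hxy, one_pow] at h
  rw [h]
  exact sum_congr rfl fun k _ => by ring

lemma sum_binom_k (s : ℕ) (x : ℝ) :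
    ∑ k ∈ range (s+1), (k : ℝ) * ((s.choose k : ℝ) * x^k * (1-x)^(s-k)) = s * x := by
  have h2 := congrArg (Polynomial.eval x) (bernsteinPolynomial.sum_smul ℝ s)
  simp only [Polynomial.eval_finset_sum, Polynomial.eval_smul, nsmul_eq_mul, Polynomial.eval_mul,
    Polynomial.eval_natCast, Polynomial.eval_pow, Polynomial.eval_X, Polynomial.eval_sub,
    Polynomial.eval_one, bernsteinPolynomial] at h2
  rw [← h2]

lemma gibbs_star (s : ℕ) (hs : 1 ≤ s) {y Q : ℝ} (hy0 : 0 < y) (hy1 : y < 1)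
    (hQ0 : 0 < Q) (hQ1 : Q < 1) :
    (s:ℝ) * (1-y) * (log Q - log (1-y))
      + ((s:ℝ) * (1 - y^s) - (s:ℝ) * (1-y)) * (log (1-Q) - log y)
      + (1 - y^s) * (log (1 - y^s) - log (1 - (1-Q)^s)) ≤ 0 := by
  have hx0 : (0:ℝ) < 1 - y := by linarith
  have hp0 : (0:ℝ) < 1 - Q := by linarith
  have hB0 : (0:ℝ) < 1 - y^s := by
    have : y^s < 1 := pow_lt_one₀ hy0.le hy1 (by omega)
    linarith
  have hqs0 : (0:ℝ) < 1 - (1-Q)^s := by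
    have : (1-Q)^s < 1 := pow_lt_one₀ hp0.le (by linarith) (by omega)
    linarith
  set x : ℝ := 1 - y with hxdef
  set p : ℝ := 1 - Q with hpdef
  set B : ℝ := 1 - y^s with hBdef
  set qs : ℝ := 1 - p^s with hqsdef
  set β : ℕ → ℝ := fun k => (s.choose k : ℝ) * x^k * y^(s-k) with hβdef
  set γ : ℕ → ℝ := fun k => (s.choose k : ℝ) * Q^k * p^(s-k) with hγdef
  have hchoose : ∀ k ∈ Icc 1 s, (0:ℝ) < (s.choose k : ℝ) := by
    intro k hk
    exact_mod_cast Nat.choose_pos (mem_Icc.1 hk).2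
  have hβpos : ∀ k ∈ Icc 1 s, 0 < β k := by
    intro k hk
    exact mul_pos (mul_pos (hchoose k hk) (pow_pos hx0 _)) (pow_pos hy0 _)
  have hγpos : ∀ k ∈ Icc 1 s, 0 < γ k := by
    intro k hk
    exact mul_pos (mul_pos (hchoose k hk) (pow_pos hQ0 _)) (pow_pos hp0 _)
  -- sums
  have hsumβ : ∑ k ∈ Icc 1 s, β k = B := by
    have h1 := sum_binom s x y (by rw [hxdef]; ring)
    rw [sum_split s] at h1
    simp only [hβdef, Nat.choose_zero_right, Nat.cast_one, pow_zero, Nat.sub_zero, one_mul,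
      mul_one] at h1 ⊢
    rw [hBdef]
    linarith [h1]
  have hsumγ : ∑ k ∈ Icc 1 s, γ k = qs := by
    have h1 := sum_binom s Q p (by rw [hpdef]; ring)
    rw [sum_split s] at h1
    simp only [hγdef, Nat.choose_zero_right, Nat.cast_one, pow_zero, Nat.sub_zero, one_mul,
      mul_one] at h1 ⊢
    rw [hqsdef]
    linarith [h1]
  have hyx : (1:ℝ) - x = y := by rw [hxdef]; ring
  have hsumkβ : ∑ k ∈ Icc 1 s, (k:ℝ) * β k = (s:ℝ) * x := by
    have h1 : ∑ k ∈ range (s+1), (k:ℝ) * β k = (s:ℝ) * x := by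
      rw [← sum_binom_k s x]
      refine sum_congr rfl fun k _ => ?_
      simp only [hβdef]
      rw [hyx]
    rw [sum_split s] at h1
    simp only [Nat.cast_zero, zero_mul, zero_add] at h1
    exact h1
  -- pointwise Gibbs
  have hpt : ∀ k ∈ Icc 1 s,
      (log Q - log x) * ((k:ℝ) * β k) + (log p - log y) * ((s:ℝ) * β k - (k:ℝ) * β k)
        + (log B - log qs) * β k ≤ γ k * (B / qs) - β k := by
    intro k hk
    obtain ⟨hk1, hks⟩ := mem_Icc.1 hk
    have hβk := hβpos k hk
    have hγk := hγpos k hk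
    have hc := hchoose k hk
    have ht : (0:ℝ) < γ k * B / (β k * qs) := by positivity
    have hlog := Real.log_le_sub_one_of_pos ht
    have hcast : ((s - k : ℕ) : ℝ) = (s:ℝ) - (k:ℝ) := by
      rw [Nat.cast_sub hks]
    have hlogγ : log (γ k) = log (s.choose k : ℝ) + (k:ℝ) * log Q + ((s:ℝ) - k) * log p := by
      rw [hγdef]
      rw [log_mul (by positivity) (by positivity), log_mul (by positivity) (by positivity),
        log_pow, log_pow, hcast]
    have hlogβ : log (β k) = log (s.choose k : ℝ) + (k:ℝ) * log x + ((s:ℝ) - k) * log y := by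
      rw [hβdef]
      rw [log_mul (by positivity) (by positivity), log_mul (by positivity) (by positivity),
        log_pow, log_pow, hcast]
    have hexp : log (γ k * B / (β k * qs))
        = log (γ k) + log B - log (β k) - log qs := by
      have e1 : log (γ k * B / (β k * qs)) = log (γ k * B) - log (β k * qs) :=
        log_div (by positivity) (by positivity)
      have e2 : log (γ k * B) = log (γ k) + log B := log_mul hγk.ne' hB0.ne'
      have e3 : log (β k * qs) = log (β k) + log qs := log_mul hβk.ne' hqs0.ne'
      rw [e1, e2, e3]; ring
    have h2 : β k * log (γ k * B / (β k * qs)) ≤ γ k * (B / qs) - β k := by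
      have := mul_le_mul_of_nonneg_left hlog hβk.le
      calc β k * log (γ k * B / (β k * qs)) ≤ β k * (γ k * B / (β k * qs) - 1) := this
        _ = γ k * (B / qs) - β k := by field_simp
    calc (log Q - log x) * ((k:ℝ) * β k) + (log p - log y) * ((s:ℝ) * β k - (k:ℝ) * β k)
          + (log B - log qs) * β k
        = β k * (log (γ k) + log B - log (β k) - log qs) := by
          rw [hlogγ, hlogβ]; ring
      _ = β k * log (γ k * B / (β k * qs)) := by rw [hexp]
      _ ≤ γ k * (B / qs) - β k := h2
  have hsum := Finset.sum_le_sum hpt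
  have hR : ∑ k ∈ Icc 1 s, (γ k * (B / qs) - β k) = 0 := by
    rw [sum_sub_distrib, ← sum_mul, hsumγ, hsumβ]
    field_simp
    ring
  rw [hR, sum_add_distrib, sum_add_distrib, ← mul_sum, ← mul_sum, ← mul_sum,
    sum_sub_distrib, ← mul_sum, hsumβ, hsumkβ] at hsum
  ring_nf at hsum ⊢
  linarith [hsum]

lemma gpoly_mono (s : ℕ) (hs : 2 ≤ s) :
    StrictMonoOn (fun z : ℝ => ∑ i ∈ range s, z ^ i) (Set.Icc 0 1) := by
  intro a ha b hb hab
  apply Finset.sum_lt_sum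
  · intro i _
    exact pow_le_pow_left₀ ha.1 hab.le i
  · exact ⟨1, mem_range.2 (by omega), by simpa using hab⟩

lemma conv_form (s : ℕ) {Q z : ℝ} (hz : z ∈ Set.Ioo (0:ℝ) 1) :
    Q * (1 - z^s) / (1 - z) = Q * ∑ i ∈ range s, z ^ i := by
  have h1 : (1:ℝ) - z ≠ 0 := by have := hz.2; intro h; linarith [hz.2]
  rw [div_eq_iff h1]
  linear_combination Q * geom_sum_mul z s

lemma rootY_eq (s : ℕ) (hs : 2 ≤ s) {Q q y : ℝ} (hQ0 : 0 < Q)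
    (hy : y ∈ Set.Ioo (0:ℝ) 1) (hq : Q * ∑ i ∈ range s, y ^ i = q) :
    rootY s Q q = y := by
  have hex : ∃ y' : ℝ, y' ∈ Set.Ioo (0 : ℝ) 1 ∧ q = Q * (1 - y' ^ s) / (1 - y') :=
    ⟨y, hy, by rw [conv_form s hy]; exact hq.symm⟩
  unfold rootY
  rw [dif_pos hex]
  have hspec := hex.choose_spec
  have h1 : Q * ∑ i ∈ range s, hex.choose ^ i = q := by
    rw [← conv_form s hspec.1]; exact hspec.2.symm
  have hmono : StrictMonoOn (fun z : ℝ => Q * ∑ i ∈ range s, z ^ i) (Set.Icc 0 1) := by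
    intro a ha b hb hab
    exact mul_lt_mul_of_pos_left (gpoly_mono s hs ha hb hab) hQ0
  have hmemc : hex.choose ∈ Set.Icc (0:ℝ) 1 :=
    ⟨hspec.1.1.le, hspec.1.2.le⟩
  have hmemy : y ∈ Set.Icc (0:ℝ) 1 := ⟨hy.1.le, hy.2.le⟩
  exact hmono.injOn hmemc hmemy (by rw [h1, hq])

lemma root_exists (s : ℕ) (hs : 2 ≤ s) {Q q : ℝ} (hQ0 : 0 < Q) (hq1 : Q < q)
    (hq2 : q < s * Q) :
    ∃ y ∈ Set.Ioo (0:ℝ) 1, Q * ∑ i ∈ range s, y ^ i = q := by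
  have hc : ContinuousOn (fun z : ℝ => Q * ∑ i ∈ range s, z ^ i) (Set.Icc 0 1) :=
    (continuous_const.mul (continuous_finset_sum _ fun i _ => continuous_pow i)).continuousOn
  have h0 : Q * ∑ i ∈ range s, (0:ℝ) ^ i = Q := by
    rw [show ∑ i ∈ range s, (0:ℝ) ^ i = 1 from by
      rw [Finset.sum_eq_single 0]
      · norm_num
      · intro i _ hi; exact zero_pow hi
      · intro h; exact absurd (mem_range.2 (by omega)) h]
    ring
  have h1 : Q * ∑ i ∈ range s, (1:ℝ) ^ i = s * Q := by simp [mul_comm]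
  have hsub := intermediate_value_Ioo (by norm_num : (0:ℝ) ≤ 1) hc
  have hqmem : q ∈ Set.Ioo (Q * ∑ i ∈ range s, (0:ℝ) ^ i) (Q * ∑ i ∈ range s, (1:ℝ) ^ i) := by
    rw [h0, h1]; exact ⟨hq1, hq2⟩
  obtain ⟨y, hy, hyq⟩ := hsub hqmem
  exact ⟨y, hy, hyq⟩

lemma afun_ge_d (s : ℕ) (hs : 2 ≤ s) {Q q : ℝ} (hQ0 : 0 < Q) (hQ1 : Q < 1)
    (hqQ : Q < q) (hqs : q < s * Q) (hq1 : q < 1) :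
    q * (log q - log (1 - (1-Q)^s)) + (1-q) * (log (1-q) - (s:ℝ) * log (1-Q))
      ≤ Afun s Q q * log 2 := by
  obtain ⟨y, hy, hgy⟩ := root_exists s hs hQ0 hqQ hqs
  have hroot : rootY s Q q = y := rootY_eq s hs hQ0 hy hgy
  obtain ⟨hy0, hy1⟩ := hy
  have hx0 : (0:ℝ) < 1 - y := by linarith
  have hp0 : (0:ℝ) < 1 - Q := by linarith
  have hB0 : (0:ℝ) < 1 - y^s := by
    have : y^s < 1 := pow_lt_one₀ hy0.le hy1 (by omega)
    linarith
  have hqs0 : (0:ℝ) < 1 - (1-Q)^s := by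
    have : (1-Q)^s < 1 := pow_lt_one₀ hp0.le (by linarith) (by omega)
    linarith
  have hq0 : 0 < q := hQ0.trans hqQ
  have h1q : (0:ℝ) < 1 - q := by linarith
  have hlog2 : log 2 ≠ 0 := (log_pos one_lt_two).ne'
  have hqx : q * (1-y) = Q * (1 - y^s) := by
    linear_combination (1 - y) * hgy.symm - Q * geom_sum_mul y s
  have hq_eq : q = Q * (1-y^s) / (1-y) := by
    rw [eq_div_iff hx0.ne']; exact hqx
  have hlogq : log q = log Q + log (1-y^s) - log (1-y) := by
    rw [hq_eq, log_div (by positivity) hx0.ne', log_mul hQ0.ne' hB0.ne']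
  have hAexp : Afun s Q q * log 2
      = (1-q)*log (1-q) + q*(log Q + (s:ℝ)*log y - log (1-y))
        + (s:ℝ)*Q*(log (1-y) - log y) + (s:ℝ)*(-Q*log Q - (1-Q)*log (1-Q)) := by
    rw [Afun, hroot, binH]
    have e1 : log (Q * y^s / (1-y)) = log Q + (s:ℝ)*log y - log (1-y) := by
      rw [log_div (by positivity) hx0.ne', log_mul hQ0.ne' (pow_pos hy0 s).ne', log_pow]
    have e2 : log ((1-y)/y) = log (1-y) - log y := log_div hx0.ne' hy0.ne'
    simp only [Real.logb, e1, e2]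
    field_simp
  have hstar := gibbs_star s (by omega) hy0 hy1 hQ0 hQ1
  have key : (1-y) * (Afun s Q q * log 2
        - (q * (log q - log (1 - (1-Q)^s)) + (1-q) * (log (1-q) - (s:ℝ) * log (1-Q))))
      = (-Q) * ((s:ℝ) * (1-y) * (log Q - log (1-y))
        + ((s:ℝ) * (1 - y^s) - (s:ℝ) * (1-y)) * (log (1-Q) - log y)
        + (1 - y^s) * (log (1 - y^s) - log (1 - (1-Q)^s))) := by
    rw [hAexp, hlogq]
    linear_combination ((s:ℝ)*log y - (s:ℝ)*log (1-Q) - log (1-y^s) + log (1-(1-Q)^s)) * hqx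
  have h2 : 0 ≤ (1-y) * (Afun s Q q * log 2
      - (q * (log q - log (1 - (1-Q)^s)) + (1-q) * (log (1-q) - (s:ℝ) * log (1-Q)))) := by
    rw [key]
    nlinarith [hstar, hQ0]
  nlinarith [h2, hx0]

lemma binH_eq (p : ℝ) : binH p = Real.binEntropy p / Real.log 2 := by
  rw [binH, Real.binEntropy, Real.logb, Real.logb, log_inv, log_inv]
  ring

lemma binH_zero : binH 0 = 0 := by simp [binH]

lemma binH_one : binH 1 = 0 := by simp [binH]

lemma binH_le_one (p : ℝ) : binH p ≤ 1 := by
  rw [binH_eq, div_le_one (log_pos one_lt_two)]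
  exact Real.binEntropy_le_log_two

lemma log2_pos : (0:ℝ) < log 2 := log_pos one_lt_two

/-- `A(s,Q,q) ≥ 1 - h(q)` (the KL divergence to `q* = 1/2` in bits), when `(1-Q)^s = 1/2`. -/
lemma afun_ge_bin (s : ℕ) (hs : 2 ≤ s) {Q q : ℝ} (hQ0 : 0 < Q) (hQ1 : Q < 1)
    (hpow : (1-Q)^s = 1/2) (hqQ : Q < q) (hqs : q < s * Q) (hq1 : q < 1) :
    1 - binH q ≤ Afun s Q q := by
  have h := afun_ge_d s hs hQ0 hQ1 hqQ hqs hq1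
  rw [hpow] at h
  have hq0 : 0 < q := hQ0.trans hqQ
  have h1q : (0:ℝ) < 1 - q := by linarith
  have hslog : (s:ℝ) * log (1-Q) = -log 2 := by
    rw [← log_pow, hpow, show (1/2:ℝ) = 2⁻¹ by norm_num, log_inv]
  have hhalf : log (1 - 1/2 : ℝ) = -log 2 := by
    rw [show (1 - 1/2:ℝ) = 2⁻¹ by norm_num, log_inv]
  have hbe : Real.binEntropy q = -(q * log q) - (1-q) * log (1-q) := by
    rw [Real.binEntropy, log_inv, log_inv]; ring
  have hd : q * (log q - log (1 - 1/2 : ℝ)) + (1-q) * (log (1-q) - (s:ℝ) * log (1-Q))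
      = log 2 - Real.binEntropy q := by
    rw [hslog, hhalf, hbe]; ring
  rw [hd] at h
  have hbinH : (1 - binH q) * log 2 = log 2 - Real.binEntropy q := by
    rw [binH_eq]; field_simp
  have := h
  rw [← hbinH] at this
  exact le_of_mul_le_mul_right (by linarith) log2_pos

lemma rootY_self (s : ℕ) (hs : 2 ≤ s) {Q : ℝ} (hQ0 : 0 < Q) : rootY s Q Q = 0 := by
  unfold rootY
  rw [dif_neg]
  rintro ⟨y, hy, heq⟩
  rw [conv_form s hy] at heq
  have hsum : (1:ℝ) < ∑ i ∈ range s, y ^ i := by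
    have h01 : (1:ℝ) = y ^ 0 := by norm_num
    rw [h01]
    apply Finset.single_lt_sum (show (1:ℕ) ≠ 0 by norm_num) (mem_range.2 (by omega))
      (mem_range.2 (by omega))
    · simpa using hy.1
    · intro k _ _; exact pow_nonneg hy.1.le k
  nlinarith [hQ0, hsum, heq]

lemma afun_self_eq (s : ℕ) (hs : 2 ≤ s) {Q : ℝ} (hQ0 : 0 < Q) :
    Afun s Q Q = (1 - Q) * Real.logb 2 (1 - Q) + (s:ℝ) * binH Q := by
  rw [Afun, rootY_self s hs hQ0]
  have h1 : (0:ℝ) ^ s = 0 := zero_pow (by omega)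
  rw [h1]
  norm_num

/-- Monotonicity of `q ↦ q·h(Q/q)`. -/
lemma fmono {Q q q' : ℝ} (hQ0 : 0 < Q) (hQq : Q ≤ q) (hqq' : q ≤ q') (hq'1 : q' ≤ 1) :
    q * binH (Q / q) ≤ q' * binH (Q / q') := by
  have hq0 : 0 < q := hQ0.trans_le hQq
  have hq'0 : 0 < q' := hq0.trans_le hqq'
  have hconc : ConcaveOn ℝ (Set.Icc (0:ℝ) 1) binH := by
    have h := (Real.strictConcave_binEntropy.concaveOn).smul
      (inv_nonneg.2 log2_pos.le)
    have hfun : binH = fun x => (log 2)⁻¹ • binEntropy x := by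
      funext p
      rw [binH_eq, smul_eq_mul, div_eq_inv_mul]
    rw [hfun]; exact h
  have hmem1 : Q / q ∈ Set.Icc (0:ℝ) 1 := by
    constructor
    · positivity
    · rw [div_le_one hq0]; exact hQq
  have hmem2 : (0:ℝ) ∈ Set.Icc (0:ℝ) 1 := by norm_num
  have ha : (0:ℝ) ≤ q / q' := by positivity
  have hb : (0:ℝ) ≤ 1 - q / q' := by
    rw [sub_nonneg, div_le_one hq'0]; exact hqq'
  have hab : q / q' + (1 - q / q') = 1 := by ring
  have hcc := hconc.2 hmem1 hmem2 ha hb hab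
  rw [smul_eq_mul, smul_eq_mul, smul_eq_mul, smul_eq_mul] at hcc
  rw [binH_zero] at hcc
  have hpt : q / q' * (Q / q) + (1 - q / q') * 0 = Q / q' := by
    field_simp
    ring
  rw [hpt] at hcc
  -- hcc : q/q' * binH (Q/q) + (1 - q/q') * 0 ≤ binH (Q/q')
  have := mul_le_mul_of_nonneg_left hcc hq'0.le
  calc q * binH (Q / q) = q' * (q / q' * binH (Q / q) + (1 - q / q') * 0) := by
        field_simp
        ring
    _ ≤ q' * binH (Q / q') := this

/-- Lower bound on `f(q₀) = h(Q) - q₀ h(Q/q₀)` in nats. -/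
lemma fq0_bound {Q θ : ℝ} (hQ0 : 0 < Q) (hQh : Q < 1/2) (hθ0 : 0 < θ) (hθ1 : θ ≤ 1/4) :
    Q * (log 2 - 2*θ - Q) ≤ (binH Q - (1/2 + θ) * binH (Q / (1/2 + θ))) * log 2 := by
  set q₀ : ℝ := 1/2 + θ with hq₀def
  have hq₀0 : 0 < q₀ := by rw [hq₀def]; linarith
  have hb0 : 0 < q₀ - Q := by rw [hq₀def]; linarith
  have hQ1 : Q < 1 := by linarith
  have hp0 : (0:ℝ) < 1 - Q := by linarith
  have hexp : (binH Q - q₀ * binH (Q / q₀)) * log 2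
      = -((1-Q) * log (1-Q)) + (q₀ - Q) * log (q₀ - Q) - q₀ * log q₀ := by
    have h1 : (1:ℝ) - Q / q₀ = (q₀ - Q) / q₀ := by field_simp
    rw [binH, binH, h1, Real.logb, Real.logb, Real.logb, Real.logb,
      log_div hb0.ne' hq₀0.ne', log_div hQ0.ne' hq₀0.ne']
    field_simp
    ring
  rw [hexp]
  -- three elementary bounds
  have b1 : log (1-Q) ≤ -Q := by
    have := Real.log_le_sub_one_of_pos hp0
    linarith
  have b2 : log q₀ - log (q₀ - Q) ≤ q₀/(q₀ - Q) - 1 := by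
    have := Real.log_le_sub_one_of_pos (div_pos hq₀0 hb0)
    rwa [log_div hq₀0.ne' hb0.ne'] at this
  have b3 : log q₀ ≤ -log 2 + 2*θ := by
    have h1 : log (1 + 2*θ) ≤ 2*θ := by
      have := Real.log_le_sub_one_of_pos (show (0:ℝ) < 1 + 2*θ by linarith)
      linarith
    have h2 : log q₀ = log (1 + 2*θ) - log 2 := by
      rw [show q₀ = (1 + 2*θ)/2 by rw [hq₀def]; ring, log_div (by linarith) two_ne_zero]
    linarith
  -- combine
  have t1 : (1-Q) * log (1-Q) ≤ (1-Q) * (-Q) := mul_le_mul_of_nonneg_left b1 hp0.le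
  have t2 : (q₀ - Q) * (log q₀ - log (q₀ - Q)) ≤ Q := by
    have := mul_le_mul_of_nonneg_left b2 hb0.le
    calc (q₀ - Q) * (log q₀ - log (q₀ - Q)) ≤ (q₀ - Q) * (q₀/(q₀ - Q) - 1) := this
      _ = Q := by field_simp; ring
  have t3 : Q * log q₀ ≤ Q * (-log 2 + 2*θ) := mul_le_mul_of_nonneg_left b3 hQ0.le
  nlinarith [t1, t2, t3]

section Qbounds

lemma two_rpow_eq (s : ℕ) : (2:ℝ)^(-(1/(s:ℝ))) = Real.exp (-(Real.log 2 / s)) := by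
  rw [Real.rpow_def_of_pos two_pos]
  congr 1
  ring

lemma pow_s_half (s : ℕ) (hs : 1 ≤ s) : ((2:ℝ)^(-(1/(s:ℝ))))^s = 1/2 := by
  have hs0 : (s:ℝ) ≠ 0 := Nat.cast_ne_zero.2 (by omega)
  rw [← Real.rpow_natCast ((2:ℝ)^(-(1/(s:ℝ)))) s, ← Real.rpow_mul (by norm_num : (0:ℝ) ≤ 2),
    show (-(1/(s:ℝ))) * (s:ℕ) = -1 by field_simp]
  rw [Real.rpow_neg_one]
  norm_num

lemma Q_le_a (s : ℕ) (hs : 1 ≤ s) : 1 - (2:ℝ)^(-(1/(s:ℝ))) ≤ Real.log 2 / s := by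
  rw [two_rpow_eq]
  have := Real.add_one_le_exp (-(Real.log 2 / s))
  linarith

lemma a_le_Q (s : ℕ) (hs : 1 ≤ s) :
    (Real.log 2 / s) * (1 - Real.log 2 / s) ≤ 1 - (2:ℝ)^(-(1/(s:ℝ))) := by
  rw [two_rpow_eq]
  set a : ℝ := Real.log 2 / s with hadef
  have ha0 : 0 < a := div_pos log2_pos (by positivity)
  have h1 : -a + 1 ≤ Real.exp (-a) := Real.add_one_le_exp (-a)
  have h2 : a + 1 ≤ Real.exp a := Real.add_one_le_exp a
  have h3 : Real.exp a * Real.exp (-a) = 1 := by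
    rw [← Real.exp_add]; norm_num
  have h4 : 0 < Real.exp (-a) := Real.exp_pos _
  nlinarith [h1, h2, h3, h4]

lemma logb_one_sub (s : ℕ) (hs : 1 ≤ s) :
    Real.logb 2 ((2:ℝ)^(-(1/(s:ℝ)))) = -(1/(s:ℝ)) :=
  Real.logb_rpow (by norm_num) (by norm_num)

end Qbounds

/-- Purely numeric inequality for the rate comparison. -/
lemma rate_lt {θ L a Q R : ℝ} (hθ0 : 0 < θ) (hθub : θ ≤ 1/100)
    (hL1 : (0.6931471803:ℝ) < L) (hL2 : L < (0.6931471808:ℝ))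
    (ha : a = L * θ^2) (hQl : a*(1-a) ≤ Q) (hQa : Q ≤ a) (hQ0 : 0 < Q)
    (hR : R ≤ a*(1-8*θ)) : R * L < Q * (L - 2*θ - Q) := by
  have hL0 : (0:ℝ) < L := by linarith
  have ha0 : 0 < a := by rw [ha]; positivity
  have hθθ : θ*θ ≤ 1/10000 := by nlinarith
  have ha_small : a ≤ 1/10000 := by nlinarith [ha, hθθ, hθ0]
  have ha7 : a ≤ (7/1000)*θ := by
    have hLθ : L * θ ≤ 7/1000 := by nlinarith
    nlinarith [mul_le_mul_of_nonneg_right hLθ hθ0.le, ha]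
  have hf3 : (0:ℝ) ≤ L - 2*θ - a := by linarith
  have hstep1 : (a*(1-a)) * (L - 2*θ - a) ≤ Q * (L - 2*θ - Q) :=
    mul_le_mul hQl (by linarith) hf3 hQ0.le
  have hkey : (1 - 8*θ)*L < (1-a)*(L - 2*θ - a) := by
    have e1 : 8*θ*(0.6931471803:ℝ) < 8*θ*L := by nlinarith
    have e2 : a*(1+L) ≤ (7/1000)*θ*2 := by nlinarith [ha7, hL2, ha0]
    nlinarith [e1, e2, mul_nonneg ha0.le hθ0.le, sq_nonneg a]
  have hmain : a*((1 - 8*θ)*L) < a*((1-a)*(L - 2*θ - a)) := (mul_lt_mul_iff_right₀ ha0).2 hkey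
  have hRL : R * L ≤ a*((1 - 8*θ)*L) := by nlinarith [mul_le_mul_of_nonneg_right hR hL0.le]
  nlinarith [hmain, hstep1, hRL]

/-- `A(s,Q,Q) ≥ 0` for the special `Q` with `log₂(1-Q) = -1/s`. -/
lemma afun_self_nonneg (s : ℕ) (hs2 : 2 ≤ s) {Q : ℝ} (hQ0 : 0 < Q) (hQ1 : Q < 1)
    (hlogb : Real.logb 2 (1 - Q) = -(1/(s:ℝ))) : 0 ≤ Afun s Q Q := by
  have hs0 : (0:ℝ) < s := by
    have : (2:ℝ) ≤ s := by exact_mod_cast hs2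
    linarith
  rw [afun_self_eq s hs2 hQ0, hlogb]
  have hbinHQ : binH Q = -Q * Real.logb 2 Q + (1-Q) * (1/(s:ℝ)) := by
    rw [binH, hlogb]; ring
  have hlogbQ : Real.logb 2 Q ≤ 0 := Real.logb_nonpos one_lt_two hQ0.le hQ1.le
  have hQlogb : 0 ≤ -Q * Real.logb 2 Q := by nlinarith [hQ0, hlogbQ]
  rw [hbinHQ]
  have h1Q : (0:ℝ) ≤ 1 - Q := by linarith
  have h1s : 1/(s:ℝ) ≤ 1 := by
    rw [div_le_one hs0]
    have : (2:ℝ) ≤ s := by exact_mod_cast hs2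
    linarith
  have hterm1 : -(1-Q) ≤ (1-Q)*(-(1/(s:ℝ))) := by
    nlinarith [mul_nonneg h1Q (show (0:ℝ) ≤ 1 - 1/(s:ℝ) by linarith)]
  have hterm2 : 1-Q ≤ (s:ℝ) * (-Q*Real.logb 2 Q + (1-Q)*(1/(s:ℝ))) := by
    have h2 : 0 ≤ (s:ℝ) * (-Q*Real.logb 2 Q) := mul_nonneg hs0.le hQlogb
    have hmul : (s:ℝ)*((1-Q)*(1/(s:ℝ))) = 1-Q := by field_simp
    nlinarith [h2, hmul]
  linarith [hterm1, hterm2]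

/-- The inner bound: every value of the inner set is at least `ε`. -/
lemma value_lower (s : ℕ) (hs2 : 2 ≤ s) {Q q₀ R q : ℝ} (hQ0 : 0 < Q) (hQhalf : Q < 1/2)
    (hpow : (1-Q)^s = 1/2) (hq₀h : 1/2 < q₀) (hq₀1 : q₀ < 1) (hq1 : q < 1)
    (hqQ : Q ≤ q) (hqlt : q < (s:ℝ) * Q) (hAself : 0 ≤ Afun s Q Q) :
    min (1 - binH q₀) (binH Q - q₀ * binH (Q/q₀) - R)
      ≤ Afun s Q q + max (binH Q - q * binH (Q / q) - R) 0 := by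
  have hQ1 : Q < 1 := by linarith
  have hq0 : 0 < q := hQ0.trans_le hqQ
  by_cases hcase : q ≤ q₀
  · -- region 1 : q ≤ q₀
    have hA : 0 ≤ Afun s Q q := by
      rcases eq_or_lt_of_le hqQ with heq | hlt
      · rw [← heq]; exact hAself
      · have h1 := afun_ge_bin s hs2 hQ0 hQ1 hpow hlt hqlt hq1
        linarith [binH_le_one q]
    have hfm : q * binH (Q/q) ≤ q₀ * binH (Q/q₀) :=
      fmono hQ0 hqQ hcase hq₀1.le
    have h1 : min (1 - binH q₀) (binH Q - q₀ * binH (Q/q₀) - R)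
        ≤ binH Q - q * binH (Q/q) - R := by
      have := min_le_right (1 - binH q₀) (binH Q - q₀ * binH (Q/q₀) - R)
      linarith
    have h2 : binH Q - q * binH (Q/q) - R ≤ max (binH Q - q * binH (Q/q) - R) 0 :=
      le_max_left _ _
    linarith
  · -- region 2 : q₀ < q
    push_neg at hcase
    have hQq : Q < q := lt_trans (lt_trans hQhalf hq₀h) hcase
    have hA : 1 - binH q ≤ Afun s Q q := afun_ge_bin s hs2 hQ0 hQ1 hpow hQq hqlt hq1
    have hanti : binH q ≤ binH q₀ := by
      have hmem1 : q₀ ∈ Set.Icc (2⁻¹:ℝ) 1 :=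
        ⟨by rw [show (2:ℝ)⁻¹ = 1/2 by norm_num]; linarith, hq₀1.le⟩
      have hmem2 : q ∈ Set.Icc (2⁻¹:ℝ) 1 :=
        ⟨by rw [show (2:ℝ)⁻¹ = 1/2 by norm_num]; linarith, hq1.le⟩
      have h := Real.binEntropy_strictAntiOn hmem1 hmem2 hcase
      rw [binH_eq, binH_eq]
      exact div_le_div_of_nonneg_right h.le log2_pos.le
    have h1 : min (1 - binH q₀) (binH Q - q₀ * binH (Q/q₀) - R) ≤ 1 - binH q₀ :=
      min_le_left _ _
    have h2 : (0:ℝ) ≤ max (binH Q - q * binH (Q/q) - R) 0 := le_max_right _ _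
    linarith

/-- The outer set is bounded above (by `s+1`). -/
lemma S_bddAbove (s : ℕ) (hs2 : 2 ≤ s) {R : ℝ} (hR0 : 0 < R) :
    BddAbove { e : ℝ | ∃ Q' ∈ Set.Ioo (0 : ℝ) 1,
      e = sInf { v : ℝ | ∃ q ∈ Set.Ico Q' (min 1 ((s : ℝ) * Q')),
        v = Afun s Q' q + max (binH Q' - q * binH (Q' / q) - R) 0 } } := by
  have hs0 : (0:ℝ) < s := by
    have : (2:ℝ) ≤ s := by exact_mod_cast hs2
    linarith
  refine ⟨(s:ℝ) + 1, ?_⟩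
  rintro e ⟨Q', hQ', rfl⟩
  have hQ'0 := hQ'.1
  have hQ'1 := hQ'.2
  have hw : Afun s Q' Q' + max (binH Q' - Q' * binH (Q' / Q') - R) 0
      ∈ { v : ℝ | ∃ q ∈ Set.Ico Q' (min 1 ((s : ℝ) * Q')),
        v = Afun s Q' q + max (binH Q' - q * binH (Q' / q) - R) 0 } := by
    refine ⟨Q', ?_, rfl⟩
    rw [Set.mem_Ico, lt_min_iff]
    refine ⟨le_refl Q', hQ'1, ?_⟩
    nlinarith [show (2:ℝ) ≤ s by exact_mod_cast hs2, hQ'0]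
  have hwb : Afun s Q' Q' + max (binH Q' - Q' * binH (Q' / Q') - R) 0 ≤ (s:ℝ) + 1 := by
    have hself : Afun s Q' Q' = (1 - Q') * Real.logb 2 (1 - Q') + (s:ℝ) * binH Q' :=
      afun_self_eq s hs2 hQ'0
    have hlb : Real.logb 2 (1 - Q') ≤ 0 :=
      Real.logb_nonpos one_lt_two (by linarith) (by linarith)
    have h1 : Afun s Q' Q' ≤ (s:ℝ) := by
      rw [hself]
      have hnp : (1 - Q') * Real.logb 2 (1 - Q') ≤ 0 :=
        mul_nonpos_of_nonneg_of_nonpos (by linarith) hlb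
      nlinarith [binH_le_one Q', hs0]
    have h2 : max (binH Q' - Q' * binH (Q' / Q') - R) 0 ≤ 1 := by
      apply max_le
      · rw [div_self hQ'0.ne', binH_one]
        linarith [binH_le_one Q']
      · norm_num
    linarith
  by_cases hbb : BddBelow { v : ℝ | ∃ q ∈ Set.Ico Q' (min 1 ((s : ℝ) * Q')),
      v = Afun s Q' q + max (binH Q' - q * binH (Q' / q) - R) 0 }
  · exact le_trans (csInf_le hbb hw) hwb
  · rw [Real.sInf_of_not_bddBelow hbb]
    positivity


end AuxLemmas

open Real Finset in
set_option maxHeartbeats 1000000 in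
/-- Theorem 2, part 2 (asymptotics): there are `δ_s → 0` such that for all
sufficiently large `s` and every rate `0 < R ≤ (ln 2 / s)(1 + δ_s)`, the random
coding lower bound `Ē_s(R)` is positive. -/
theorem EbarDisj_pos_for_small_rates :
    ∃ δ : ℕ → ℝ, Filter.Tendsto δ Filter.atTop (nhds 0) ∧
      ∃ s₀ : ℕ, ∀ s : ℕ, s₀ ≤ s → ∀ R : ℝ, 0 < R →
        R ≤ Real.log 2 / (s : ℝ) * (1 + δ s) → 0 < EbarDisj s R := by
  refine ⟨fun s => -8 / Real.sqrt s, ?_, 10000, ?_⟩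
  · -- δ → 0
    have h1 : Filter.Tendsto (fun s : ℕ => Real.sqrt s) Filter.atTop Filter.atTop := by
      rw [Filter.tendsto_atTop]
      intro b
      filter_upwards [Filter.eventually_ge_atTop (Nat.ceil (b^2))] with n hn
      have h2 : (b^2 : ℝ) ≤ (n:ℝ) := by
        calc (b^2:ℝ) ≤ (Nat.ceil (b^2) : ℝ) := Nat.le_ceil _
          _ ≤ n := by exact_mod_cast hn
      calc b ≤ |b| := le_abs_self b
        _ = Real.sqrt (b^2) := (Real.sqrt_sq_eq_abs b).symm
        _ ≤ Real.sqrt n := Real.sqrt_le_sqrt h2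
    exact Filter.Tendsto.div_atTop tendsto_const_nhds h1
  · intro s hs R hR0 hRle
    have hs2 : 2 ≤ s := le_trans (by norm_num) hs
    have hsR : (10000:ℝ) ≤ (s:ℝ) := by exact_mod_cast hs
    have hs0 : (0:ℝ) < s := by linarith
    -- θ and its bounds
    set θ : ℝ := (Real.sqrt s)⁻¹ with hθdef
    have hsqrt0 : 0 < Real.sqrt s := Real.sqrt_pos.2 hs0
    have hsqrt100 : (100:ℝ) ≤ Real.sqrt s := by
      have : Real.sqrt 10000 ≤ Real.sqrt s := Real.sqrt_le_sqrt hsR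
      rwa [show (10000:ℝ) = 100^2 by norm_num,
        Real.sqrt_sq (by norm_num : (0:ℝ) ≤ 100)] at this
    have hθ0 : 0 < θ := by positivity
    have hθub : θ ≤ 1/100 := by
      rw [hθdef, inv_le_comm₀ hsqrt0 (by norm_num)]
      linarith
    have hθsq : θ^2 = 1/(s:ℝ) := by
      rw [hθdef, inv_pow, Real.sq_sqrt hs0.le, one_div]
    -- a and its bounds
    set a : ℝ := Real.log 2 / s with hadef
    have ha0 : 0 < a := div_pos log2_pos hs0
    have haθ : a = Real.log 2 * θ^2 := by rw [hθsq, hadef]; ring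
    have hlog2l : (0.6931471803:ℝ) < Real.log 2 := Real.log_two_gt_d9
    have hlog2u : Real.log 2 < 0.6931471808 := Real.log_two_lt_d9
    -- Q and its bounds
    set Q : ℝ := 1 - (2:ℝ)^(-(1/(s:ℝ))) with hQdef
    have hQa : Q ≤ a := Q_le_a s (by omega)
    have hQl : a * (1 - a) ≤ Q := a_le_Q s (by omega)
    have hpow : (1-Q)^s = 1/2 := by
      rw [hQdef, show (1 - (1 - (2:ℝ)^(-(1/(s:ℝ))))) = (2:ℝ)^(-(1/(s:ℝ))) by ring]
      exact pow_s_half s (by omega)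
    have hlogb : Real.logb 2 (1 - Q) = -(1/(s:ℝ)) := by
      rw [hQdef, show (1 - (1 - (2:ℝ)^(-(1/(s:ℝ))))) = (2:ℝ)^(-(1/(s:ℝ))) by ring]
      exact logb_one_sub s (by omega)
    have ha_small : a ≤ 1/10000 := by
      rw [haθ, hθsq]
      have h1 : Real.log 2 * (1/(s:ℝ)) ≤ 1 * (1/(s:ℝ)) :=
        mul_le_mul_of_nonneg_right (by linarith) (by positivity)
      have h2 : 1/(s:ℝ) ≤ 1/10000 := one_div_le_one_div_of_le (by norm_num) hsR
      linarith
    have hQ0 : 0 < Q := lt_of_lt_of_le (by nlinarith : (0:ℝ) < a * (1-a)) hQl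
    have hQhalf : Q < 1/2 := lt_of_le_of_lt hQa (by linarith)
    have hQ1 : Q < 1 := by linarith
    have hsa : (s:ℝ) * a = Real.log 2 := by
      rw [hadef]; field_simp
    have hsQ : (s:ℝ) * Q ≤ Real.log 2 := by
      calc (s:ℝ) * Q ≤ (s:ℝ) * a := by nlinarith
        _ = Real.log 2 := hsa
    have hsQ1 : (s:ℝ) * Q < 1 := lt_of_le_of_lt hsQ (by linarith)
    have hQsQ : Q < (s:ℝ) * Q := by nlinarith [hQ0, show (2:ℝ) ≤ s by exact_mod_cast hs2]
    -- q₀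
    set q₀ : ℝ := 1/2 + θ with hq₀def
    have hq₀1 : q₀ < 1 := by rw [hq₀def]; linarith
    have hq₀h : 1/2 < q₀ := by rw [hq₀def]; linarith
    -- ε > 0
    have hε1 : 0 < 1 - binH q₀ := by
      have hne : q₀ ≠ 2⁻¹ := by
        rw [hq₀def]; intro h
        rw [show (2:ℝ)⁻¹ = 1/2 by norm_num] at h
        linarith
      have hlt : Real.binEntropy q₀ < Real.log 2 := Real.binEntropy_lt_log_two.2 hne
      have h2 : Real.binEntropy q₀ / Real.log 2 < 1 := (div_lt_one log2_pos).2 hlt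
      rw [binH_eq]
      linarith
    have hRub : R ≤ a * (1 - 8*θ) := by
      have hRle' : R ≤ Real.log 2 / (s:ℝ) * (1 + (-8 / Real.sqrt s)) := hRle
      have hδ : -8 / Real.sqrt s = -(8*θ) := by
        rw [hθdef, div_eq_mul_inv]; ring
      have heq : Real.log 2 / (s:ℝ) * (1 + (-8 / Real.sqrt s)) = a * (1 - 8*θ) := by
        rw [hδ, hadef]; ring
      linarith [hRle', heq]
    have hε2 : 0 < binH Q - q₀ * binH (Q/q₀) - R := by
      have hbound : Q * (Real.log 2 - 2*θ - Q)
          ≤ (binH Q - q₀ * binH (Q / q₀)) * Real.log 2 := by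
        rw [hq₀def]
        exact fq0_bound hQ0 hQhalf hθ0 (by linarith)
      have hnum : R * Real.log 2 < Q * (Real.log 2 - 2*θ - Q) :=
        rate_lt hθ0 hθub hlog2l hlog2u haθ hQl hQa hQ0 hRub
      have hlast : R * Real.log 2 < (binH Q - q₀ * binH (Q / q₀)) * Real.log 2 :=
        lt_of_lt_of_le hnum hbound
      have := lt_of_mul_lt_mul_right hlast log2_pos.le
      linarith
    -- assemble
    rw [EbarDisj]
    have hmin : min 1 ((s:ℝ)*Q) = (s:ℝ)*Q := min_eq_right hsQ1.le
    have hAself : 0 ≤ Afun s Q Q := afun_self_nonneg s hs2 hQ0 hQ1 hlogb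
    have hTlb : ∀ v ∈ { v : ℝ | ∃ q ∈ Set.Ico Q (min 1 ((s : ℝ) * Q)),
        v = Afun s Q q + max (binH Q - q * binH (Q / q) - R) 0 },
        min (1 - binH q₀) (binH Q - q₀ * binH (Q/q₀) - R) ≤ v := by
      rintro v ⟨q, hq, rfl⟩
      rw [Set.mem_Ico, hmin] at hq
      obtain ⟨hqQ, hqlt⟩ := hq
      have hq1 : q < 1 := lt_of_lt_of_le hqlt (hsQ.trans (by linarith))
      exact value_lower s hs2 hQ0 hQhalf hpow hq₀h hq₀1 hq1 hqQ hqlt hAself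
    have hTne : { v : ℝ | ∃ q ∈ Set.Ico Q (min 1 ((s : ℝ) * Q)),
        v = Afun s Q q + max (binH Q - q * binH (Q / q) - R) 0 }.Nonempty := by
      refine ⟨Afun s Q Q + max (binH Q - Q * binH (Q / Q) - R) 0, ⟨Q, ?_, rfl⟩⟩
      rw [Set.mem_Ico, hmin]
      exact ⟨le_refl Q, hQsQ⟩
    have hbdd := S_bddAbove s hs2 hR0
    have hinf := le_csInf hTne hTlb
    have hmem : sInf { v : ℝ | ∃ q ∈ Set.Ico Q (min 1 ((s : ℝ) * Q)),
        v = Afun s Q q + max (binH Q - q * binH (Q / q) - R) 0 }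
        ∈ { e : ℝ | ∃ Q' ∈ Set.Ioo (0 : ℝ) 1,
          e = sInf { v : ℝ | ∃ q ∈ Set.Ico Q' (min 1 ((s : ℝ) * Q')),
            v = Afun s Q' q + max (binH Q' - q * binH (Q' / q) - R) 0 } } :=
      ⟨Q, ⟨hQ0, hQ1⟩, rfl⟩
    have hsup := le_csSup hbdd hmem
    have hε : 0 < min (1 - binH q₀) (binH Q - q₀ * binH (Q/q₀) - R) := lt_min hε1 hε2
    linarith
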